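/- In the braid group B_3, if a word w in σ_1^{±1}, σ_2^{±1} contains a subword σ_2 u σ_2^{-1} where u = (σ_1 σ_2 σ_2 σ_1)^k for some k ≥ 0, then w is not geodesic: the element of B_3 represented by w is also represented by a word with strictly fewer letters. -/
import Mathlib


/-- The braid relations on `m` generators `σ_0, …, σ_{m-1}` (0-based indexing). -/
def braidRels (m : ℕ) : Set (FreeGroup (Fin m)) :=
  {r | (∃ i j : Fin m, (i : ℕ) + 1 = (j : ℕ) ∧
          r = FreeGroup.of i * FreeGroup.of j * FreeGroup.of i *
              (FreeGroup.of j * FreeGroup.of i * FreeGroup.of j)⁻¹) ∨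
       (∃ i j : Fin m, (i : ℕ) + 2 ≤ (j : ℕ) ∧
          r = FreeGroup.of i * FreeGroup.of j * (FreeGroup.of i * FreeGroup.of j)⁻¹)}

/-- The braid group `B_n`, with Artin generators indexed (0-based) by `Fin (n-1)`. -/
abbrev BraidGroup (n : ℕ) := PresentedGroup (braidRels (n - 1))

/-- The Artin generator `σ_{i+1}` in 1-based notation, i.e. the `i`-th generator 0-based;
returns `1` for out-of-range indices. -/
def braidGen (n i : ℕ) : BraidGroup n :=
  if h : i < n - 1 then PresentedGroup.of ⟨i, h⟩ else 1

/-- Evaluation of a word: a letter `(i, true)` is `σ_i` (0-based) and `(i, false)` is `σ_i⁻¹`. -/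
def evalWord (n : ℕ) (w : List (ℕ × Bool)) : BraidGroup n :=
  (w.map fun p => if p.2 then braidGen n p.1 else (braidGen n p.1)⁻¹).prod

/-- `k`-fold concatenation (power) of a word. -/
def wpow (u : List (ℕ × Bool)) (k : ℕ) : List (ℕ × Bool) :=
  (List.replicate k u).flatten

/-- The semicircular word `σ_i^ε σ_{i±1}^ε ⋯ σ_j^ε` (0-based indices, `true` = positive sign). -/
def semiWord (i j : ℕ) (ε : Bool) : List (ℕ × Bool) :=
  if i ≤ j then (List.range (j - i + 1)).map fun t => (i + t, ε)
  else (List.range (i - j + 1)).map fun t => (i - t, ε)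

/-- The semicircular move as an element of the braid group. -/
def semiMove (n i j : ℕ) (ε : Bool) : BraidGroup n := evalWord n (semiWord i j ε)

/-- Letter `σ_1` of `B_3` (0-based index 0). -/
def A : ℕ × Bool := (0, true)
/-- Letter `σ_1⁻¹`. -/
def A' : ℕ × Bool := (0, false)
/-- Letter `σ_2`. -/
def B : ℕ × Bool := (1, true)
/-- Letter `σ_2⁻¹`. -/
def B' : ℕ × Bool := (1, false)

/-- A word in the letters `σ_1^{±1}, σ_2^{±1}` of `B_3`. -/
def ValidWord3 (w : List (ℕ × Bool)) : Prop := ∀ l ∈ w, l.1 < 2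

/-- A word is geodesic if no strictly shorter word in the generators `σ_1^{±1}, σ_2^{±1}`
represents the same element of `B_3`. -/
def Geodesic3 (w : List (ℕ × Bool)) : Prop :=
  ∀ w', ValidWord3 w' → evalWord 3 w' = evalWord 3 w → w.length ≤ w'.length

lemma rel3 : braidGen 3 0 * braidGen 3 1 * braidGen 3 0
    = braidGen 3 1 * braidGen 3 0 * braidGen 3 1 := by
  have h : ((0:Fin 2):ℕ) + 1 = ((1:Fin 2):ℕ) := rfl
  have hr : (FreeGroup.of (0:Fin 2) * FreeGroup.of (1:Fin 2) * FreeGroup.of 0 *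
      (FreeGroup.of 1 * FreeGroup.of 0 * FreeGroup.of 1)⁻¹) ∈ braidRels 2 :=
    Or.inl ⟨0, 1, h, rfl⟩
  have h1 : PresentedGroup.mk (braidRels 2) (FreeGroup.of (0:Fin 2) * FreeGroup.of 1 *
      FreeGroup.of 0 * (FreeGroup.of 1 * FreeGroup.of 0 * FreeGroup.of 1)⁻¹) = 1 := by
    apply (QuotientGroup.eq_one_iff _).mpr
    exact Subgroup.subset_normalClosure hr
  simp only [map_mul, map_inv] at h1
  have := mul_inv_eq_one.mp h1
  simpa [braidGen, PresentedGroup.of] using this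

lemma evalWord_append (n : ℕ) (u v : List (ℕ × Bool)) :
    evalWord n (u ++ v) = evalWord n u * evalWord n v := by
  simp [evalWord]

lemma comm_abba : braidGen 3 1 * evalWord 3 [A, B, B, A]
    = evalWord 3 [A, B, B, A] * braidGen 3 1 := by
  have h := rel3
  set a := braidGen 3 0
  set b := braidGen 3 1
  have e : evalWord 3 [A, B, B, A] = a * b * b * a := by
    simp [evalWord, A, B, a, b, mul_assoc]
  rw [e]
  calc b * (a * b * b * a) = (b * a * b) * (b * a) := by group
    _ = (a * b * a) * (b * a) := by rw [← h]
    _ = (a * b) * (a * b * a) := by group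
    _ = (a * b) * (b * a * b) := by rw [h]
    _ = (a * b * b * a) * b := by group

lemma comm_wpow (k : ℕ) : braidGen 3 1 * evalWord 3 (wpow [A, B, B, A] k)
    = evalWord 3 (wpow [A, B, B, A] k) * braidGen 3 1 := by
  induction k with
  | zero => simp [wpow, evalWord]
  | succ n ih =>
    have : wpow [A, B, B, A] (n+1) = [A, B, B, A] ++ wpow [A, B, B, A] n := by
      simp [wpow, List.replicate_succ]
    rw [this, evalWord_append]
    calc braidGen 3 1 * (evalWord 3 [A,B,B,A] * evalWord 3 (wpow [A,B,B,A] n))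
        = (braidGen 3 1 * evalWord 3 [A,B,B,A]) * evalWord 3 (wpow [A,B,B,A] n) := by
          rw [mul_assoc]
      _ = evalWord 3 [A,B,B,A] * (braidGen 3 1 * evalWord 3 (wpow [A,B,B,A] n)) := by
          rw [comm_abba, mul_assoc]
      _ = evalWord 3 [A,B,B,A] * evalWord 3 (wpow [A,B,B,A] n) * braidGen 3 1 := by
          rw [ih, mul_assoc]

lemma key_eval (k : ℕ) :
    evalWord 3 ([B] ++ wpow [A, B, B, A] k ++ [B']) = evalWord 3 (wpow [A, B, B, A] k) := by
  rw [evalWord_append, evalWord_append]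
  have hB : evalWord 3 [B] = braidGen 3 1 := by simp [evalWord, B]
  have hB' : evalWord 3 [B'] = (braidGen 3 1)⁻¹ := by simp [evalWord, B']
  rw [hB, hB', comm_wpow, mul_assoc, mul_inv_cancel, mul_one]

/-- in `B_3`, any word containing a subword `σ_2 (σ_1 σ_2 σ_2 σ_1)^k σ_2⁻¹`
(for some `k ≥ 0`) is not geodesic. -/
theorem stmt15 (w : List (ℕ × Bool)) (hw : ValidWord3 w) (k : ℕ)
    (hsub : ([B] ++ wpow [A, B, B, A] k ++ [B']) <:+: w) :
    ¬ Geodesic3 w := by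
  intro hg
  obtain ⟨p, s, hps⟩ := hsub
  set mid := [B] ++ wpow [A, B, B, A] k ++ [B'] with hmid
  set w' := p ++ wpow [A, B, B, A] k ++ s with hw'
  have hvalid : ValidWord3 w' := by
    intro l hl
    rw [hw'] at hl
    simp only [List.mem_append] at hl
    rcases hl with (hl | hl) | hl
    · exact hw l (by rw [← hps]; simp [hl])
    · have hlu : l ∈ wpow [A, B, B, A] k := hl
      simp only [wpow, List.mem_flatten] at hlu
      obtain ⟨u, hu, hlu⟩ := hlu
      rw [List.eq_of_mem_replicate hu] at hlu
      simp only [List.mem_cons, List.not_mem_nil, or_false] at hlu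
      rcases hlu with h|h|h|h <;> simp [h, A, B]
    · exact hw l (by rw [← hps]; simp [hl])
  have heval : evalWord 3 w' = evalWord 3 w := by
    rw [← hps, hw']
    rw [evalWord_append, evalWord_append, evalWord_append, evalWord_append, key_eval]
  have hlen := hg w' hvalid heval
  rw [← hps, hw'] at hlen
  simp only [List.length_append, List.length_cons, List.length_nil] at hlen
  have hm : mid.length = 1 + (wpow [A, B, B, A] k).length + 1 := by
    simp [hmid]; omega
  omega
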